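/- arXiv:2210.14032 — 5 statements merged into one kernel-verified Lean document; each statement's English description precedes it below -/
import Mathlib

section
/- Let p be a probability distribution on R^D with mean m and positive-definite covariance Σ. Then KL(p ‖ N(0, I)) = KL(p ‖ N(m, Σ)) + KL(N(m, Σ) ‖ N(0, I)), i.e., the KL divergence to the standard normal decomposes as the divergence to the closest Gaussian plus the divergence of that Gaussian to the standard normal. -/
/-!
The densities of `N(m, Σ)` and `N(0, I)` are positive, so
`KL(p ‖ N(0, I)) - KL(p ‖ N(m, Σ)) = ∫ log (φ_{m,Σ} / φ_{0,I}) dp`. This log-ratio is a quadratic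
polynomial in `x`, so its integral depends only on the mean and covariance of `p`, which are
those of `N(m, Σ)`; integrating against `N(m, Σ)` instead gives `KL(N(m, Σ) ‖ N(0, I))`.
The moments of `N(m, Σ)` come from identifying it with `multivariateGaussian`, the image of the
standard Gaussian under `u ↦ m + Σ^{1/2} u`.
-/

open MeasureTheory Matrix

/-- Density of the multivariate Gaussian `N(m, Σ)` on `ℝ^D`. -/
noncomputable def gaussianDensity {D : ℕ} (m : Fin D → ℝ) (S : Matrix (Fin D) (Fin D) ℝ)
    (x : Fin D → ℝ) : ℝ :=
  (Real.sqrt ((2 * Real.pi) ^ D * S.det))⁻¹ *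
    Real.exp (-(1 / 2) * dotProduct (x - m) (S⁻¹ *ᵥ (x - m)))

/-- The multivariate Gaussian measure `N(m, Σ)` on `ℝ^D`. -/
noncomputable def gaussianMeasure {D : ℕ} (m : Fin D → ℝ) (S : Matrix (Fin D) (Fin D) ℝ) :
    Measure (Fin D → ℝ) :=
  volume.withDensity fun x => ENNReal.ofReal (gaussianDensity m S x)

/-- Kullback-Leibler divergence `KL(p ‖ q) = ∫ log (dp/dq) dp`. -/
noncomputable def klDiv' {D : ℕ} (p q : Measure (Fin D → ℝ)) : ℝ :=
  ∫ x, Real.log ((p.rnDeriv q x).toReal) ∂p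

open ProbabilityTheory WithLp
open scoped ENNReal MatrixOrder

section WithDensity

variable {α β : Type*} [MeasurableSpace α] [MeasurableSpace β]

theorem map_withDensity_comp {μ : Measure α} {φ : α → β} (hφ : Measurable φ)
    {f : β → ℝ≥0∞} (hf : Measurable f) :
    (μ.withDensity (f ∘ φ)).map φ = (μ.map φ).withDensity f := by
  ext s hs
  rw [Measure.map_apply hφ hs, withDensity_apply _ (hφ hs), withDensity_apply _ hs,
    setLIntegral_map hs hf hφ]
  rfl

variable {μ ν : Measure α} [SigmaFinite ν] {f g : α → ℝ}

theorem log_rnDeriv_withDensity_ofReal [SigmaFinite μ] (hμν : μ ≪ ν) (hf : Measurable f)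
    (hf_pos : ∀ x, 0 < f x) :
    (fun x => Real.log (μ.rnDeriv (ν.withDensity fun y => ENNReal.ofReal (f y)) x).toReal) =ᵐ[μ]
      fun x => Real.log (μ.rnDeriv ν x).toReal - Real.log (f x) := by
  have hdens := Measure.rnDeriv_withDensity_right μ ν hf.ennreal_ofReal.aemeasurable
    (ae_of_all _ fun x => by simpa using hf_pos x) (ae_of_all _ fun _ => ENNReal.ofReal_ne_top)
  filter_upwards [hμν.ae_le hdens, hμν.ae_le (Measure.rnDeriv_lt_top μ ν),
    Measure.rnDeriv_pos hμν] with x hx hlt hpos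
  rw [hx, ENNReal.toReal_mul, ENNReal.toReal_inv, ENNReal.toReal_ofReal (hf_pos x).le,
    Real.log_mul (inv_ne_zero (hf_pos x).ne') (ENNReal.toReal_pos hpos.ne' hlt.ne).ne',
    Real.log_inv]
  ring

theorem integral_log_rnDeriv_withDensity_eq_add [SigmaFinite μ] (hμν : μ ≪ ν)
    (hf : Measurable f) (hf_pos : ∀ x, 0 < f x) (hg : Measurable g) (hg_pos : ∀ x, 0 < g x)
    (hμf : Integrable
      (fun x => Real.log (μ.rnDeriv (ν.withDensity fun y => ENNReal.ofReal (f y)) x).toReal) μ)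
    (hfg : Integrable (fun x => Real.log (f x) - Real.log (g x)) μ) :
    ∫ x, Real.log (μ.rnDeriv (ν.withDensity fun y => ENNReal.ofReal (g y)) x).toReal ∂μ =
      ∫ x, Real.log (μ.rnDeriv (ν.withDensity fun y => ENNReal.ofReal (f y)) x).toReal ∂μ +
        ∫ x, (Real.log (f x) - Real.log (g x)) ∂μ := by
  rw [← integral_add hμf hfg]
  refine integral_congr_ae ?_
  filter_upwards [log_rnDeriv_withDensity_ofReal hμν hg hg_pos,
    log_rnDeriv_withDensity_ofReal hμν hf hf_pos] with x hgx hfx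
  rw [hgx, hfx]
  ring

theorem integral_log_rnDeriv_withDensity_withDensity (hf : Measurable f) (hf_pos : ∀ x, 0 < f x)
    (hg : Measurable g) (hg_pos : ∀ x, 0 < g x) :
    ∫ x, Real.log (((ν.withDensity fun y => ENNReal.ofReal (f y)).rnDeriv
        (ν.withDensity fun y => ENNReal.ofReal (g y))) x).toReal
        ∂(ν.withDensity fun y => ENNReal.ofReal (f y)) =
      ∫ x, (Real.log (f x) - Real.log (g x)) ∂(ν.withDensity fun y => ENNReal.ofReal (f y)) := by
  have := SigmaFinite.withDensity_of_ne_top (μ := ν)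
    (ae_of_all _ fun y => ENNReal.ofReal_ne_top (r := f y))
  have hac := withDensity_absolutelyContinuous ν fun y => ENNReal.ofReal (f y)
  refine integral_congr_ae ?_
  filter_upwards [log_rnDeriv_withDensity_ofReal hac hg hg_pos,
    hac.ae_le (Measure.rnDeriv_withDensity ν hf.ennreal_ofReal)] with x hgx hfx
  rw [hgx, hfx, ENNReal.toReal_ofReal (hf_pos x).le]

end WithDensity

section Moments

variable {ι : Type*}

theorem centered_quadratic_eq_sum [Fintype ι] (m : ι → ℝ) (c : ℝ) (b : ι → ℝ)
    (a : Matrix ι ι ℝ) (x : ι → ℝ) :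
    c + b ⬝ᵥ (x - m) + (x - m) ⬝ᵥ a *ᵥ (x - m) =
      c + ∑ i, b i * (x i - m i) + ∑ i, ∑ j, a i j * ((x i - m i) * (x j - m j)) := by
  simp only [dotProduct, mulVec, Pi.sub_apply, Finset.mul_sum]
  congr 1
  exact Finset.sum_congr rfl fun i _ => Finset.sum_congr rfl fun j _ => by ring

structure HasMeanCovariance (μ : Measure (ι → ℝ)) (m : ι → ℝ) (S : Matrix ι ι ℝ) : Prop where
  integrable_sq : ∀ i, Integrable (fun x => x i ^ 2) μ
  integral_eq : ∀ i, ∫ x, x i ∂μ = m i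
  integral_mul_eq : ∀ i j, ∫ x, (x i - m i) * (x j - m j) ∂μ = S i j

namespace HasMeanCovariance

variable {μ : Measure (ι → ℝ)} {m : ι → ℝ} {S : Matrix ι ι ℝ}

theorem memLp_apply (h : HasMeanCovariance μ m S) (i : ι) : MemLp (fun x => x i) 2 μ :=
  (memLp_two_iff_integrable_sq (measurable_pi_apply i).aestronglyMeasurable).2 (h.integrable_sq i)

variable [IsProbabilityMeasure μ]

theorem memLp_sub (h : HasMeanCovariance μ m S) (i : ι) : MemLp (fun x => x i - m i) 2 μ :=
  (h.memLp_apply i).sub (memLp_const _)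

theorem integral_sub_eq_zero (h : HasMeanCovariance μ m S) (i : ι) :
    ∫ x, (x i - m i) ∂μ = 0 := by
  rw [integral_sub ((h.memLp_apply i).integrable one_le_two) (integrable_const _),
    h.integral_eq i, integral_const, probReal_univ, one_smul, sub_self]

theorem integrable_linear (h : HasMeanCovariance μ m S) (b : ι → ℝ) (i : ι) :
    Integrable (fun x => b i * (x i - m i)) μ :=
  ((h.memLp_sub i).integrable one_le_two).const_mul (b i)

theorem integrable_bilinear (h : HasMeanCovariance μ m S) (a : Matrix ι ι ℝ) (i j : ι) :
    Integrable (fun x => a i j * ((x i - m i) * (x j - m j))) μ :=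
  ((h.memLp_sub i).integrable_mul (h.memLp_sub j)).const_mul (a i j)

variable [Fintype ι]

theorem integrable_quadratic (h : HasMeanCovariance μ m S) (c : ℝ) (b : ι → ℝ)
    (a : Matrix ι ι ℝ) :
    Integrable (fun x => c + b ⬝ᵥ (x - m) + (x - m) ⬝ᵥ a *ᵥ (x - m)) μ := by
  simp_rw [centered_quadratic_eq_sum]
  exact ((integrable_const c).add (integrable_finsetSum _ fun i _ => h.integrable_linear b i)).add
    (integrable_finsetSum _ fun i _ => integrable_finsetSum _ fun j _ =>
      h.integrable_bilinear a i j)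

theorem integral_quadratic (h : HasMeanCovariance μ m S) (c : ℝ) (b : ι → ℝ)
    (a : Matrix ι ι ℝ) :
    ∫ x, (c + b ⬝ᵥ (x - m) + (x - m) ⬝ᵥ a *ᵥ (x - m)) ∂μ = c + ∑ i, ∑ j, a i j * S i j := by
  have hlin : ∫ x, ∑ i, b i * (x i - m i) ∂μ = 0 := by
    rw [integral_finsetSum _ fun i _ => h.integrable_linear b i]
    simp only [integral_const_mul, h.integral_sub_eq_zero, mul_zero, Finset.sum_const_zero]
  have hquad : ∫ x, ∑ i, ∑ j, a i j * ((x i - m i) * (x j - m j)) ∂μ =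
      ∑ i, ∑ j, a i j * S i j := by
    rw [integral_finsetSum _ fun i _ =>
      integrable_finsetSum _ fun j _ => h.integrable_bilinear a i j]
    refine Finset.sum_congr rfl fun i _ => ?_
    rw [integral_finsetSum _ fun j _ => h.integrable_bilinear a i j]
    simp only [integral_const_mul, h.integral_mul_eq]
  have hc_lin : Integrable (fun x => c + ∑ i, b i * (x i - m i)) μ :=
    (integrable_const c).add (integrable_finsetSum _ fun i _ => h.integrable_linear b i)
  simp_rw [centered_quadratic_eq_sum]
  rw [integral_add hc_lin (integrable_finsetSum _ fun i _ => integrable_finsetSum _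
      fun j _ => h.integrable_bilinear a i j),
    integral_add (integrable_const c) (integrable_finsetSum _ fun i _ => h.integrable_linear b i),
    integral_const, probReal_univ, one_smul, hlin, hquad, add_zero]

end HasMeanCovariance

end Moments

theorem dotProduct_mulVec_inv_mul_self {n R : Type*} [Fintype n] [DecidableEq n] [CommRing R]
    {A : Matrix n n R} (hA : IsUnit A.det) (hAT : Aᵀ = A) (u : n → R) :
    A *ᵥ u ⬝ᵥ (A * A)⁻¹ *ᵥ (A *ᵥ u) = u ⬝ᵥ u := by
  rw [Matrix.mul_inv_rev, mulVec_mulVec, Matrix.mul_assoc, nonsing_inv_mul A hA, Matrix.mul_one,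
    dotProduct_mulVec, ← vecMul_transpose, vecMul_vecMul, hAT, mul_nonsing_inv A hA, vecMul_one]

theorem map_volume_add_mulVec {ι : Type*} [Fintype ι] [DecidableEq ι] {A : Matrix ι ι ℝ}
    (hA : A.det ≠ 0) (m : ι → ℝ) :
    (volume : Measure (ι → ℝ)).map (fun u => m + A *ᵥ u) = ENNReal.ofReal |A.det⁻¹| • volume := by
  have hcomp : (fun u : ι → ℝ => m + A *ᵥ u) = (m + ·) ∘ toLin' A := rfl
  rw [hcomp, ← Measure.map_map (measurable_const_add m)
    (toLin' A).continuous_of_finiteDimensional.measurable,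
    Real.map_matrix_volume_pi_eq_smul_volume_pi hA, Measure.map_smul,
    (measurePreserving_add_left volume m).map_eq]

section Gaussian

variable {D : ℕ}

theorem continuous_gaussianDensity (m : Fin D → ℝ) (S : Matrix (Fin D) (Fin D) ℝ) :
    Continuous (gaussianDensity m S) := by
  unfold gaussianDensity
  fun_prop

theorem gaussianDensity_pos (m : Fin D → ℝ) {S : Matrix (Fin D) (Fin D) ℝ} (hS : S.PosDef)
    (x : Fin D → ℝ) : 0 < gaussianDensity m S x := by
  have := hS.det_pos
  unfold gaussianDensity
  positivity

theorem log_gaussianDensity (m : Fin D → ℝ) {S : Matrix (Fin D) (Fin D) ℝ} (hS : S.PosDef)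
    (x : Fin D → ℝ) :
    Real.log (gaussianDensity m S x) =
      -(1 / 2) * Real.log ((2 * Real.pi) ^ D * S.det) - (1 / 2) * (x - m) ⬝ᵥ S⁻¹ *ᵥ (x - m) := by
  have : 0 < (2 * Real.pi) ^ D * S.det := mul_pos (by positivity) hS.det_pos
  rw [gaussianDensity, Real.log_mul (by positivity) (Real.exp_pos _).ne', Real.log_inv,
    Real.log_sqrt this.le, Real.log_exp]
  ring

theorem log_gaussianDensity_sub_log_gaussianDensity_zero_one (m : Fin D → ℝ)
    {S : Matrix (Fin D) (Fin D) ℝ} (hS : S.PosDef) (x : Fin D → ℝ) :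
    Real.log (gaussianDensity m S x) - Real.log (gaussianDensity 0 1 x) =
      (-(1 / 2) * Real.log S.det + (1 / 2) * m ⬝ᵥ m) + m ⬝ᵥ (x - m) +
        (x - m) ⬝ᵥ ((1 / 2 : ℝ) • (1 - S⁻¹)) *ᵥ (x - m) := by
  rw [log_gaussianDensity m hS, log_gaussianDensity 0 PosDef.one, det_one, mul_one,
    Real.log_mul (by positivity) hS.det_pos.ne', inv_one, sub_zero, one_mulVec]
  simp only [smul_mulVec, sub_mulVec, one_mulVec, dotProduct_smul, dotProduct_sub, sub_dotProduct,
    smul_eq_mul, dotProduct_comm x m]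
  ring

theorem gaussianDensity_zero_one_eq_prod (x : Fin D → ℝ) :
    gaussianDensity 0 1 x = ∏ i, gaussianPDFReal 0 1 (x i) := by
  have hsqrt : Real.sqrt ((2 * Real.pi) ^ D) = ∏ _i : Fin D, Real.sqrt (2 * Real.pi) := by
    rw [← Real.sqrt_prod _ fun _ _ => by positivity, Finset.prod_const, Finset.card_univ,
      Fintype.card_fin]
  simp only [gaussianDensity, gaussianPDFReal, det_one, mul_one, sub_zero, inv_one, one_mulVec,
    dotProduct, NNReal.coe_one, Finset.prod_mul_distrib, ← Real.exp_sum, hsqrt,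
    Finset.prod_inv_distrib, Finset.mul_sum]
  congr 2
  exact Finset.sum_congr rfl fun i _ => by ring

theorem gaussianMeasure_zero_one_eq_pi :
    gaussianMeasure (0 : Fin D → ℝ) 1 = Measure.pi fun _ => gaussianReal 0 1 := by
  symm
  refine Measure.pi_eq fun s hs => ?_
  set h : Fin D → ℝ → ℝ := fun i => (s i).indicator (gaussianPDFReal 0 1)
  have hh : ∀ i, Integrable (h i) := fun i => (integrable_gaussianPDFReal 0 1).indicator (hs i)
  have hh_nonneg : ∀ i t, 0 ≤ h i t := fun i t =>
    Set.indicator_nonneg (fun t _ => gaussianPDFReal_nonneg 0 1 t) t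
  have hind : (Set.univ.pi s).indicator (fun x => ENNReal.ofReal (gaussianDensity 0 1 x))
      = fun x => ENNReal.ofReal (∏ i, h i (x i)) := by
    ext x
    by_cases hx : x ∈ Set.univ.pi s
    · simp only [Set.mem_univ_pi] at hx
      simp [h, hx, gaussianDensity_zero_one_eq_prod]
    · obtain ⟨i, hi⟩ : ∃ i, x i ∉ s i := by simpa using hx
      rw [Set.indicator_of_notMem hx, Finset.prod_eq_zero (Finset.mem_univ i) (by simp [h, hi]),
        ENNReal.ofReal_zero]
  rw [gaussianMeasure, withDensity_apply _ (MeasurableSet.univ_pi hs), ← lintegral_indicator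
    (MeasurableSet.univ_pi hs), hind, ← ofReal_integral_eq_lintegral_ofReal
    (by rw [volume_pi]; exact Integrable.fintype_prod hh)
    (ae_of_all _ fun x => Finset.prod_nonneg fun i _ => hh_nonneg i (x i)),
    integral_fintype_prod_volume_eq_prod, ENNReal.ofReal_prod_of_nonneg
    fun i _ => integral_nonneg (hh_nonneg i)]
  refine Finset.prod_congr rfl fun i _ => ?_
  rw [gaussianReal_apply_eq_integral 0 one_ne_zero, integral_indicator (hs i)]

theorem gaussianDensity_zero_one_eq_abs_det_mul {A : Matrix (Fin D) (Fin D) ℝ} (hA : IsUnit A.det)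
    (hAT : Aᵀ = A) (m u : Fin D → ℝ) :
    gaussianDensity 0 1 u = |A.det| * gaussianDensity m (A * A) (m + A *ᵥ u) := by
  have h2π : (0 : ℝ) < (2 * Real.pi) ^ D := by positivity
  have hdet : 0 < |A.det| := abs_pos.mpr hA.ne_zero
  rw [gaussianDensity, gaussianDensity, add_sub_cancel_left,
    dotProduct_mulVec_inv_mul_self hA hAT]
  simp only [det_one, mul_one, sub_zero, inv_one, one_mulVec, det_mul, Real.sqrt_mul h2π.le,
    Real.sqrt_mul_self_eq_abs]
  field_simp

theorem gaussianMeasure_mul_self_eq_map {A : Matrix (Fin D) (Fin D) ℝ} (hA : IsUnit A.det)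
    (hAT : Aᵀ = A) (m : Fin D → ℝ) :
    gaussianMeasure m (A * A) = (gaussianMeasure 0 1).map (fun u => m + A *ᵥ u) := by
  have hφ : Measurable fun u : Fin D → ℝ => m + A *ᵥ u := by fun_prop
  have hg : Measurable fun x => ENNReal.ofReal (gaussianDensity m (A * A) x) :=
    (continuous_gaussianDensity m _).measurable.ennreal_ofReal
  have hdens : (fun u => ENNReal.ofReal (gaussianDensity 0 1 u)) = ENNReal.ofReal |A.det| •
      ((fun x => ENNReal.ofReal (gaussianDensity m (A * A) x)) ∘ fun u => m + A *ᵥ u) := by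
    ext u
    rw [gaussianDensity_zero_one_eq_abs_det_mul hA hAT m u, ENNReal.ofReal_mul (abs_nonneg _)]
    rfl
  symm
  rw [gaussianMeasure, hdens, withDensity_smul _ (hg.comp hφ), Measure.map_smul,
    map_withDensity_comp hφ hg, map_volume_add_mulVec hA.ne_zero, withDensity_smul_measure,
    smul_smul, ← ENNReal.ofReal_mul (abs_nonneg _), abs_inv,
    mul_inv_cancel₀ (abs_ne_zero.mpr hA.ne_zero), ENNReal.ofReal_one, one_smul]
  rfl

theorem gaussianMeasure_eq_map_multivariateGaussian (m : Fin D → ℝ)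
    {S : Matrix (Fin D) (Fin D) ℝ} (hS : S.PosDef) :
    gaussianMeasure m S = (multivariateGaussian (toLp 2 m) S).map ofLp := by
  set A := CFC.sqrt S
  have hAA : A * A = S := CFC.sqrt_mul_sqrt_self S hS.posSemidef.nonneg
  have hAT : Aᵀ = A := by
    simpa [conjTranspose_eq_transpose_of_trivial] using
      (CFC.sqrt_nonneg S).posSemidef.isHermitian.eq
  have hA : IsUnit A.det := by
    refine isUnit_iff_ne_zero.mpr fun h => hS.det_pos.ne' ?_
    rw [← hAA, det_mul, h, mul_zero]
  rw [← hAA, gaussianMeasure_mul_self_eq_map hA hAT, gaussianMeasure_zero_one_eq_pi, hAA,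
    multivariateGaussian, ← map_pi_eq_stdGaussian, Measure.map_map (by fun_prop) (by fun_prop),
    Measure.map_map (by fun_prop) (by fun_prop)]
  rfl

theorem isProbabilityMeasure_gaussianMeasure (m : Fin D → ℝ) {S : Matrix (Fin D) (Fin D) ℝ}
    (hS : S.PosDef) :
    IsProbabilityMeasure (gaussianMeasure m S) := by
  rw [gaussianMeasure_eq_map_multivariateGaussian m hS]
  exact Measure.isProbabilityMeasure_map (by fun_prop)

theorem hasMeanCovariance_gaussianMeasure (m : Fin D → ℝ) {S : Matrix (Fin D) (Fin D) ℝ}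
    (hS : S.PosDef) :
    HasMeanCovariance (gaussianMeasure m S) m S := by
  set N := multivariateGaussian (toLp 2 m) S
  have hmarg (i : Fin D) : MeasurePreserving (fun x : EuclideanSpace ℝ (Fin D) => x i) N
      (gaussianReal (m i) (S i i).toNNReal) :=
    measurePreserving_eval_multivariateGaussian hS.posSemidef
  have hmean (i : Fin D) : ∫ x, x i ∂N = m i := by
    rw [← integral_id_gaussianReal (μ := m i) (v := (S i i).toNNReal), ← (hmarg i).map_eq,
      integral_map (by fun_prop) (by fun_prop)]
  rw [gaussianMeasure_eq_map_multivariateGaussian m hS]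
  refine ⟨fun i => ?_, fun i => ?_, fun i j => ?_⟩
  · rw [integrable_map_measure (Measurable.aestronglyMeasurable (by fun_prop)) (by fun_prop)]
    exact ((hmarg i).integrable_comp (by fun_prop)).2 (memLp_id_gaussianReal 2).integrable_sq
  · rw [integral_map (by fun_prop) (Measurable.aestronglyMeasurable (by fun_prop))]
    exact hmean i
  · rw [integral_map (by fun_prop) (Measurable.aestronglyMeasurable (by fun_prop))]
    have hcov := covariance_eval_multivariateGaussian (μ := toLp 2 m) hS.posSemidef i j
    rwa [covariance, hmean i, hmean j] at hcov

end Gaussian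

section KL

variable {D : ℕ} {m m' : Fin D → ℝ} {S T : Matrix (Fin D) (Fin D) ℝ}

theorem klDiv'_gaussianMeasure_eq_add {p : Measure (Fin D → ℝ)} [SigmaFinite p]
    (hac : p ≪ volume) (hS : S.PosDef) (hT : T.PosDef)
    (hfin : Integrable (fun x => Real.log ((p.rnDeriv (gaussianMeasure m S) x).toReal)) p)
    (hST : Integrable
      (fun x => Real.log (gaussianDensity m S x) - Real.log (gaussianDensity m' T x)) p) :
    klDiv' p (gaussianMeasure m' T) = klDiv' p (gaussianMeasure m S) +
      ∫ x, (Real.log (gaussianDensity m S x) - Real.log (gaussianDensity m' T x)) ∂p :=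
  integral_log_rnDeriv_withDensity_eq_add hac (continuous_gaussianDensity m S).measurable
    (gaussianDensity_pos m hS) (continuous_gaussianDensity m' T).measurable
    (gaussianDensity_pos m' hT) hfin hST

theorem klDiv'_gaussianMeasure_gaussianMeasure (hS : S.PosDef) (hT : T.PosDef) :
    klDiv' (gaussianMeasure m S) (gaussianMeasure m' T) =
      ∫ x, (Real.log (gaussianDensity m S x) - Real.log (gaussianDensity m' T x))
        ∂(gaussianMeasure m S) :=
  integral_log_rnDeriv_withDensity_withDensity (continuous_gaussianDensity m S).measurable
    (gaussianDensity_pos m hS) (continuous_gaussianDensity m' T).measurable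
    (gaussianDensity_pos m' hT)

end KL

/-- Pythagorean identity: the KL divergence of `p` to the standard normal decomposes as the
divergence of `p` to the closest Gaussian `N(m, Σ)` plus the divergence of that Gaussian
to the standard normal. -/
theorem kl_pythagorean_identity {D : ℕ} (p : Measure (Fin D → ℝ)) [IsProbabilityMeasure p]
    (m : Fin D → ℝ) (S : Matrix (Fin D) (Fin D) ℝ) (hS : S.PosDef)
    (hac : p ≪ volume)
    (hmom : ∀ i, Integrable (fun x => (x i) ^ 2) p)
    (hmean : ∀ i, ∫ x, x i ∂p = m i)
    (hcov : ∀ i j, ∫ x, (x i - m i) * (x j - m j) ∂p = S i j)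
    (hfin : Integrable (fun x => Real.log ((p.rnDeriv (gaussianMeasure m S) x).toReal)) p) :
    klDiv' p (gaussianMeasure 0 1) =
      klDiv' p (gaussianMeasure m S) + klDiv' (gaussianMeasure m S) (gaussianMeasure 0 1) := by
  have hp : HasMeanCovariance p m S := ⟨hmom, hmean, hcov⟩
  have hN := hasMeanCovariance_gaussianMeasure m hS
  have := isProbabilityMeasure_gaussianMeasure m hS
  have hratio := log_gaussianDensity_sub_log_gaussianDensity_zero_one m hS
  rw [klDiv'_gaussianMeasure_eq_add hac hS PosDef.one hfin
      (by simp_rw [hratio]; exact hp.integrable_quadratic _ _ _),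
    klDiv'_gaussianMeasure_gaussianMeasure hS PosDef.one]
  simp_rw [hratio, hp.integral_quadratic, hN.integral_quadratic]
end

section
/- For all n ∈ N, k ∈ {1, …, n−1}, and pairwise distinct reals a_1, …, a_n, the determinant of the n×n matrix whose i-th row is (1, a_i, …, a_i^{k−1}, a_i^{k+1}, …, a_i^n) (the Vandermonde rows with the power k omitted and power n appended) equals V(a_1, …, a_n) · e_{n−k}(a_1, …, a_n), where V is the Vandermonde determinant ∏_{i<j}(a_j − a_i) and e_m is the elementary symmetric polynomial of degree m. -/
/-!
Adjoin a variable `X` to the points `a₁, …, aₙ`. The Vandermonde determinant of `a₁, …, aₙ, X`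
is `V(a) · ∏ (X - aᵢ)`, whose coefficient of `X ^ k` is `(-1) ^ (n - k) V(a) e_{n-k}(a)` by
Vieta's formulas. Expanding the same determinant along its last row `(1, X, …, Xⁿ)` shows that
this coefficient is also `(-1) ^ (n + k)` times the minor obtained by deleting the column of
`k`-th powers, which is the determinant in question.
-/

open Finset Polynomial

theorem Fin.val_succAbove {n : ℕ} (p : Fin (n + 1)) (j : Fin n) :
    (p.succAbove j : ℕ) = if (j : ℕ) < p then (j : ℕ) else (j : ℕ) + 1 := by
  simp only [Fin.succAbove, Fin.lt_def]
  split_ifs <;> simp_all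

namespace Matrix

variable {R : Type*} [CommRing R] {n : ℕ}

def vandermondeOmit (v : Fin n → R) (j : Fin (n + 1)) : Matrix (Fin n) (Fin n) R :=
  of fun i l => v i ^ (j.succAbove l : ℕ)

theorem det_vandermonde_eq_prod_Iio (v : Fin n → R) :
    det (vandermonde v) = ∏ j, ∏ i ∈ Iio j, (v j - v i) := by
  rw [det_vandermonde, prod_comm' (t' := univ) (s' := Iio) (by simp)]

theorem det_vandermonde_snoc (v : Fin n → R) (x : R) :
    det (vandermonde (Fin.snoc v x : Fin (n + 1) → R)) =
      det (vandermonde v) * ∏ i, (x - v i) := by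
  simp [det_vandermonde_eq_prod_Iio, Fin.prod_univ_castSucc, Fin.prod_Iio_castSucc,
    Fin.Iio_last_eq_map]

theorem det_vandermonde_snoc_eq_sum (v : Fin n → R) (x : R) :
    det (vandermonde (Fin.snoc v x : Fin (n + 1) → R)) =
      ∑ j : Fin (n + 1), (-1) ^ (n + j : ℕ) * det (vandermondeOmit v j) * x ^ (j : ℕ) := by
  rw [det_succ_row _ (Fin.last n)]
  refine sum_congr rfl fun j _ => ?_
  simp only [Fin.val_last, vandermonde_apply, Fin.snoc_last, submatrix, Fin.succAbove_last,
    Fin.snoc_castSucc, vandermondeOmit]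
  ring

theorem det_vandermonde_comp {S : Type*} [CommRing S] (f : R →+* S) (v : Fin n → R) :
    det (vandermonde (f ∘ v)) = f (det (vandermonde v)) := by
  rw [RingHom.map_det]
  congr 1
  ext
  simp [vandermonde_apply]

theorem det_vandermondeOmit_comp {S : Type*} [CommRing S] (f : R →+* S) (v : Fin n → R)
    (j : Fin (n + 1)) : det (vandermondeOmit (f ∘ v) j) = f (det (vandermondeOmit v j)) := by
  rw [RingHom.map_det]
  congr 1
  ext
  simp [vandermondeOmit]

theorem coeff_det_vandermonde_snoc_X_eq_det_vandermondeOmit (a : Fin n → R) (j : Fin (n + 1)) :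
    (det (vandermonde (Fin.snoc (C ∘ a) X : Fin (n + 1) → R[X]))).coeff j =
      (-1) ^ (n + j : ℕ) * det (vandermondeOmit a j) := by
  simp_rw [det_vandermonde_snoc_eq_sum, det_vandermondeOmit_comp, ← C_1, ← C_neg, ← C_pow,
    ← C_mul, finsetSum_coeff, coeff_C_mul_X_pow, Fin.val_inj, sum_ite_eq, mem_univ, if_true]

theorem coeff_det_vandermonde_snoc_X_eq_esymm (a : Fin n → R) {k : ℕ} (hk : k ≤ n) :
    (det (vandermonde (Fin.snoc (C ∘ a) X : Fin (n + 1) → R[X]))).coeff k =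
      (-1) ^ (n - k) * det (vandermonde a) * ∑ t ∈ powersetCard (n - k) univ, ∏ i ∈ t, a i := by
  have hprod : ∏ i, (X - C (a i)) = ((univ.val.map a).map fun t => X - C t).prod := by
    rw [Multiset.map_map]
    rfl
  rw [det_vandermonde_snoc, det_vandermonde_comp, coeff_C_mul, Function.comp_def, hprod,
    Multiset.prod_X_sub_C_coeff _ (by simpa), esymm_map_val]
  simp only [Fin.univ_val_map, Multiset.coe_card, List.length_ofFn]
  ring

theorem det_vandermondeOmit (a : Fin n → R) (k : Fin (n + 1)) :
    det (vandermondeOmit a k) =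
      det (vandermonde a) * ∑ t ∈ powersetCard (n - k) univ, ∏ i ∈ t, a i := by
  have hk : (k : ℕ) ≤ n := Fin.is_le k
  have hsign : ((-1) ^ (n + k : ℕ) : R) = (-1) ^ (n - k) := by
    rw [show n + k = n - k + 2 * k by omega, pow_add, pow_mul]
    simp
  have h := (coeff_det_vandermonde_snoc_X_eq_det_vandermondeOmit a k).symm.trans
    (coeff_det_vandermonde_snoc_X_eq_esymm a hk)
  rw [hsign, mul_assoc] at h
  exact (isUnit_neg_one.pow _).mul_left_cancel h

end Matrix

theorem det_vandermonde_omit_power_general {n : ℕ} (k : ℕ)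
    (a : Fin n → ℝ) :
    Matrix.det (Matrix.of fun i j : Fin n =>
        a i ^ (if (j : ℕ) < k then (j : ℕ) else (j : ℕ) + 1)) =
      (∏ j : Fin n, ∏ i ∈ Finset.univ.filter (· < j), (a j - a i)) *
        (∑ t ∈ Finset.powersetCard (n - k) (Finset.univ : Finset (Fin n)), ∏ i ∈ t, a i) := by
  -- For `k > n` the matrix is the plain Vandermonde matrix, i.e. the case `k = n`.
  have hmatrix : (Matrix.of fun i j : Fin n =>
      a i ^ (if (j : ℕ) < k then (j : ℕ) else (j : ℕ) + 1)) =
        Matrix.vandermondeOmit a ⟨min k n, by omega⟩ := by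
    ext i j
    simp [Matrix.vandermondeOmit, Fin.val_succAbove]
  rw [hmatrix, Matrix.det_vandermondeOmit, Matrix.det_vandermonde_eq_prod_Iio,
    show n - min k n = n - k by omega]
  simp only [filter_gt_eq_Iio]

/-- Vandermonde determinant with one power omitted: for pairwise distinct `a₁, …, aₙ` and
`1 ≤ k ≤ n−1`, the determinant of the matrix with rows `(1, aᵢ, …, aᵢ^{k−1}, aᵢ^{k+1}, …, aᵢⁿ)`
equals `V(a₁,…,aₙ) · e_{n−k}(a₁,…,aₙ)`, where `V` is the Vandermonde product and `e_m` the
elementary symmetric polynomial of degree `m`. -/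
theorem det_vandermonde_omit_power {n : ℕ} (k : ℕ) (hk1 : 1 ≤ k) (hk2 : k ≤ n - 1)
    (a : Fin n → ℝ) (ha : Function.Injective a) :
    Matrix.det (Matrix.of fun i j : Fin n =>
        a i ^ (if (j : ℕ) < k then (j : ℕ) else (j : ℕ) + 1)) =
      (∏ j : Fin n, ∏ i ∈ Finset.univ.filter (· < j), (a j - a i)) *
        (∑ t ∈ Finset.powersetCard (n - k) (Finset.univ : Finset (Fin n)), ∏ i ∈ t, a i) :=
  det_vandermonde_omit_power_general k a
end

section
/- (Cartwright–Field inequality) Let λ_1, …, λ_D be positive reals with arithmetic mean λ̄, geometric mean g = (∏ λ_i)^{1/D}, variance Var[λ] = (1/D)Σ(λ_i − λ̄)², maximum λ_max and minimum λ_min. Then Var[λ]/(2 λ_max) ≤ λ̄ − g ≤ Var[λ]/(2 λ_min). -/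
/-!
For `x` and `c` in `[m, M] ⊆ (0, ∞)`, the identity
`log x - log c - (x - c) / c = -∫_c^x (t - c) / (c t) dt` gives the second-order bounds
`log c + (x - c) / c - (x - c)² / (2 c m) ≤ log x ≤ log c + (x - c) / c - (x - c)² / (2 c M)`.
Averaging over the `λᵢ` turns `(λᵢ - c)²` into `Var[λ] + (λ̄ - c)²`, and `log g` is the average
of `log λᵢ`. With `c = λ̄` the lower bound gives `log g ≥ log λ̄ - Var[λ] / (2 λ̄ λmin)`, and
`1 + y ≤ exp y` finishes. For the upper bound take `c = λ̄ - Var[λ] / (2 λmax)`: then the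
linear term cancels the variance term exactly, leaving `log g ≤ log c`.
-/

open Finset Real Set
open scoped BigOperators

lemma monotoneOn_Ioi_of_hasDerivAt_nonneg {f f' : ℝ → ℝ} {a : ℝ}
    (hf : ∀ x ∈ Ioi a, HasDerivAt f (f' x) x) (hf' : ∀ x ∈ Ioi a, 0 ≤ f' x) :
    MonotoneOn f (Ioi a) :=
  monotoneOn_of_hasDerivWithinAt_nonneg (convex_Ioi a)
    (fun x hx => (hf x hx).continuousAt.continuousWithinAt)
    (fun x hx => by rw [interior_Ioi] at hx; exact (hf x hx).hasDerivWithinAt)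
    (fun x hx => by rw [interior_Ioi] at hx; exact hf' x hx)

lemma monotoneOn_log_sub_add_sq {c : ℝ} (hc : 0 < c) :
    MonotoneOn (fun x => log x - (x - c) / c + (x - c) ^ 2 / (2 * c * c)) (Ioi 0) := by
  refine monotoneOn_Ioi_of_hasDerivAt_nonneg (f' := fun x => (x - c) ^ 2 / (x * c ^ 2))
    (fun x hx => ?_) (fun x hx => by have : 0 < x := hx; positivity)
  have hx : x ≠ 0 := ne_of_gt hx
  refine (((hasDerivAt_log hx).sub (((hasDerivAt_id' x).sub_const c).div_const c)).add
    ((((hasDerivAt_id' x).sub_const c).pow 2).div_const (2 * c * c))).congr_deriv ?_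
  field_simp
  ring

lemma monotoneOn_div_sub_div_sub_log {c : ℝ} (hc : 0 < c) :
    MonotoneOn (fun x => (x / c - c / x) / 2 - log x) (Ioi 0) := by
  refine monotoneOn_Ioi_of_hasDerivAt_nonneg (f' := fun x => (x - c) ^ 2 / (2 * c * x ^ 2))
    (fun x hx => ?_) (fun x hx => by have : 0 < x := hx; positivity)
  have hx : x ≠ 0 := ne_of_gt hx
  refine (((((hasDerivAt_id' x).div_const c).sub
    ((hasDerivAt_const x c).div (hasDerivAt_id' x) hx)).div_const 2).sub
    (hasDerivAt_log hx)).congr_deriv ?_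
  field_simp
  ring

lemma log_le_log_add_sub_div_sub_sq_div {x c M : ℝ} (hx : 0 < x) (hc : 0 < c)
    (hxM : x ≤ M) (hcM : c ≤ M) :
    log x ≤ log c + (x - c) / c - (x - c) ^ 2 / (2 * c * M) := by
  rcases le_total x c with hxc | hcx
  · have h := monotoneOn_log_sub_add_sq hc hx (mem_Ioi.2 hc) hxc
    have : (x - c) ^ 2 / (2 * c * M) ≤ (x - c) ^ 2 / (2 * c * c) := by gcongr
    simp only [sub_self, zero_div, add_zero, zero_pow two_ne_zero] at h
    linarith
  · have h := monotoneOn_div_sub_div_sub_log hc (mem_Ioi.2 hc) (mem_Ioi.2 hx) hcx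
    have hid : (x / c - c / x) / 2 = (x - c) / c - (x - c) ^ 2 / (2 * c * x) := by
      field_simp
      ring
    have : (x - c) ^ 2 / (2 * c * M) ≤ (x - c) ^ 2 / (2 * c * x) := by gcongr
    simp only [sub_self, zero_div, zero_sub] at h
    linarith

lemma log_add_sub_div_sub_sq_div_le_log {x c m : ℝ} (hm : 0 < m) (hmx : m ≤ x) (hmc : m ≤ c) :
    log c + (x - c) / c - (x - c) ^ 2 / (2 * c * m) ≤ log x := by
  have hx : 0 < x := hm.trans_le hmx
  have hc : 0 < c := hm.trans_le hmc
  rcases le_total x c with hxc | hcx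
  · have h := monotoneOn_div_sub_div_sub_log hc (mem_Ioi.2 hx) (mem_Ioi.2 hc) hxc
    have hid : (x / c - c / x) / 2 = (x - c) / c - (x - c) ^ 2 / (2 * c * x) := by
      field_simp
      ring
    have : (x - c) ^ 2 / (2 * c * x) ≤ (x - c) ^ 2 / (2 * c * m) := by gcongr
    simp only [sub_self, zero_div, zero_sub] at h
    linarith
  · have h := monotoneOn_log_sub_add_sq hc (mem_Ioi.2 hc) hx hcx
    have : (x - c) ^ 2 / (2 * c * c) ≤ (x - c) ^ 2 / (2 * c * m) := by gcongr
    simp only [sub_self, zero_div, add_zero, zero_pow two_ne_zero] at h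
    linarith

section
variable {ι : Type*} [Fintype ι] (x : ι → ℝ)

lemma prod_rpow_one_div_card_eq_exp_expect_log (hx : ∀ i, 0 < x i) :
    (∏ i, x i) ^ ((1 : ℝ) / Fintype.card ι) = exp (𝔼 i, log (x i)) := by
  rw [rpow_def_of_pos (prod_pos fun i _ => hx i), log_prod fun i _ => (hx i).ne',
    Fintype.expect_eq_sum_div_card, mul_one_div]

variable [Nonempty ι]

lemma expect_sub_sq (c : ℝ) :
    𝔼 i, (x i - c) ^ 2 = 𝔼 i, (x i - 𝔼 j, x j) ^ 2 + (𝔼 j, x j - c) ^ 2 := by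
  set A := 𝔼 j, x j
  have hcentered : 𝔼 i, (x i - A) = 0 := by
    rw [expect_sub_distrib, Fintype.expect_const, sub_self]
  calc 𝔼 i, (x i - c) ^ 2 = 𝔼 i, ((x i - A) ^ 2 + 2 * (A - c) * (x i - A) + (A - c) ^ 2) :=
        expect_congr rfl fun i _ => by ring
    _ = 𝔼 i, (x i - A) ^ 2 + (A - c) ^ 2 := by
        rw [expect_add_distrib, expect_add_distrib, ← mul_expect, hcentered,
          Fintype.expect_const]
        ring

lemma expect_log_add_sub_div_sub_sq_div (c K : ℝ) :
    𝔼 i, (log c + (x i - c) / c - (x i - c) ^ 2 / (2 * c * K)) =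
      log c + (𝔼 i, x i - c) / c -
        (𝔼 i, (x i - 𝔼 j, x j) ^ 2 + (𝔼 j, x j - c) ^ 2) / (2 * c * K) := by
  rw [expect_sub_distrib, expect_add_distrib, ← expect_div, ← expect_div, expect_sub_distrib,
    expect_sub_sq, Fintype.expect_const, Fintype.expect_const]

lemma expect_log_le {M c : ℝ} (hx : ∀ i, 0 < x i) (hxM : ∀ i, x i ≤ M) (hc : 0 < c)
    (hcM : c ≤ M) :
    𝔼 i, log (x i) ≤ log c + (𝔼 i, x i - c) / c -
      (𝔼 i, (x i - 𝔼 j, x j) ^ 2 + (𝔼 j, x j - c) ^ 2) / (2 * c * M) :=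
  (expect_le_expect fun i _ => log_le_log_add_sub_div_sub_sq_div (hx i) hc (hxM i) hcM).trans_eq
    (expect_log_add_sub_div_sub_sq_div x c M)

lemma le_expect_log {m c : ℝ} (hm : 0 < m) (hmx : ∀ i, m ≤ x i) (hmc : m ≤ c) :
    log c + (𝔼 i, x i - c) / c -
        (𝔼 i, (x i - 𝔼 j, x j) ^ 2 + (𝔼 j, x j - c) ^ 2) / (2 * c * m) ≤ 𝔼 i, log (x i) :=
  (expect_log_add_sub_div_sub_sq_div x c m).symm.trans_le
    (expect_le_expect fun i _ => log_add_sub_div_sub_sq_div_le_log hm (hmx i) hmc)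

theorem prod_rpow_one_div_card_le_expect_sub {M : ℝ} (hx : ∀ i, 0 < x i)
    (hxM : ∀ i, x i ≤ M) :
    (∏ i, x i) ^ ((1 : ℝ) / Fintype.card ι) ≤
      𝔼 i, x i - (𝔼 i, (x i - 𝔼 j, x j) ^ 2) / (2 * M) := by
  set A := 𝔼 i, x i
  set V := 𝔼 i, (x i - A) ^ 2
  have hA : 0 < A := expect_pos (fun i _ => hx i) univ_nonempty
  have hAM : A ≤ M := expect_le univ_nonempty fun i _ => hxM i
  have hM : 0 < M := hA.trans_le hAM
  have hV : V ≤ A * (M - A) := by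
    have h := expect_sub_sq x 0
    simp only [sub_zero] at h
    have : 𝔼 i, x i ^ 2 ≤ 𝔼 i, M * x i :=
      expect_le_expect fun i _ => by nlinarith [hx i, hxM i]
    rw [← mul_expect] at this
    linarith
  set t := V / (2 * M)
  have ht : 0 ≤ t := div_nonneg (expect_nonneg fun i _ => sq_nonneg _) (by positivity)
  have htA : t < A := by
    rw [div_lt_iff₀ (by positivity)]
    nlinarith
  set B := A - t
  have hB : 0 < B := sub_pos.2 htA
  have hlog : 𝔼 i, log (x i) ≤ log B := by
    have h : 𝔼 i, log (x i) ≤ log B + (A - B) / B - (V + (A - B) ^ 2) / (2 * B * M) :=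
      expect_log_le x hx hxM hB (by linarith)
    have hcancel : (A - B) / B - (V + (A - B) ^ 2) / (2 * B * M) = -(t ^ 2 / (2 * B * M)) := by
      simp only [B, t]
      field_simp
      ring
    have : 0 ≤ t ^ 2 / (2 * B * M) := by positivity
    linarith
  calc (∏ i, x i) ^ ((1 : ℝ) / Fintype.card ι) = exp (𝔼 i, log (x i)) :=
        prod_rpow_one_div_card_eq_exp_expect_log x hx
    _ ≤ exp (log B) := exp_le_exp.2 hlog
    _ = B := exp_log hB

theorem expect_sub_le_prod_rpow_one_div_card {m : ℝ} (hm : 0 < m) (hmx : ∀ i, m ≤ x i) :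
    𝔼 i, x i - (𝔼 i, (x i - 𝔼 j, x j) ^ 2) / (2 * m) ≤
      (∏ i, x i) ^ ((1 : ℝ) / Fintype.card ι) := by
  set A := 𝔼 i, x i
  set V := 𝔼 i, (x i - A) ^ 2
  have hmA : m ≤ A := le_expect univ_nonempty fun i _ => hmx i
  have hA : 0 < A := hm.trans_le hmA
  have hlog : log A - V / (2 * A * m) ≤ 𝔼 i, log (x i) := by
    have h : log A + (A - A) / A - (V + (A - A) ^ 2) / (2 * A * m) ≤ 𝔼 i, log (x i) :=
      le_expect_log x hm hmx hmA
    simpa only [sub_self, zero_div, add_zero, zero_pow two_ne_zero] using h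
  calc A - V / (2 * m) = A * (-(V / (2 * A * m)) + 1) := by
        field_simp
        ring
    _ ≤ A * exp (-(V / (2 * A * m))) := by
        gcongr
        exact add_one_le_exp _
    _ = exp (log A - V / (2 * A * m)) := by rw [sub_eq_add_neg, exp_add, exp_log hA]
    _ ≤ exp (𝔼 i, log (x i)) := exp_le_exp.2 hlog
    _ = (∏ i, x i) ^ ((1 : ℝ) / Fintype.card ι) :=
        (prod_rpow_one_div_card_eq_exp_expect_log x fun i => hm.trans_le (hmx i)).symm

end

/-- Cartwright–Field inequality: for positive reals `λ₁, …, λ_D` with arithmetic mean `λ̄`,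
geometric mean `g`, variance `Var[λ]`, maximum `λmax` and minimum `λmin`,
`Var[λ]/(2 λmax) ≤ λ̄ − g ≤ Var[λ]/(2 λmin)`. -/
theorem cartwright_field {D : ℕ} (hD : 0 < D) (lam : Fin D → ℝ)
    (hpos : ∀ i, 0 < lam i) (lmax lmin : ℝ)
    (hmax : IsGreatest (Set.range lam) lmax) (hmin : IsLeast (Set.range lam) lmin) :
    ((1 / D) * ∑ i, (lam i - (1 / D) * ∑ j, lam j) ^ 2) / (2 * lmax) ≤
        (1 / D) * (∑ i, lam i) - (∏ i, lam i) ^ ((1 : ℝ) / D) ∧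
      (1 / D) * (∑ i, lam i) - (∏ i, lam i) ^ ((1 : ℝ) / D) ≤
        ((1 / D) * ∑ i, (lam i - (1 / D) * ∑ j, lam j) ^ 2) / (2 * lmin) := by
  have : Nonempty (Fin D) := Fin.pos_iff_nonempty.mp hD
  have hlmin : 0 < lmin := by
    obtain ⟨i, rfl⟩ := hmin.1
    exact hpos i
  have hgeom_le := prod_rpow_one_div_card_le_expect_sub lam hpos fun i => hmax.2 ⟨i, rfl⟩
  have hle_geom := expect_sub_le_prod_rpow_one_div_card lam hlmin fun i => hmin.2 ⟨i, rfl⟩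
  simp only [Fintype.expect_eq_sum_div_card, Fintype.card_fin] at hgeom_le hle_geom
  simp only [one_div_mul_eq_div]
  constructor <;> linarith
end

section
/- Among all tuples of positive reals λ_1, …, λ_D with arithmetic mean 1 (i.e., Σλ_i = D) and geometric mean g ∈ (0,1) (i.e., ∏λ_i = g^D), the condition number κ = λ_max / λ_min satisfies κ ≤ (1 + √(1 − g^D)) / (1 − √(1 − g^D)). -/
/-!
Replacing two entries `a, b` of a nonnegative tuple by their mean `(a + b) / 2` keeps the sum
and multiplies the product by `((a + b) / 2) ^ 2 / (a b)`. Applying AM-GM to the new tuple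
gives `g ^ D (a + b) ^ 2 ≤ 4 a b` for every pair of entries, i.e.
`(a - b) ^ 2 ≤ (1 - g ^ D) (a + b) ^ 2`, which for `a = λmax`, `b = λmin` is the bound on the
condition number.
-/

open Finset

theorem prod_le_arith_mean_pow_card {ι : Type*} (s : Finset ι) (f : ι → ℝ)
    (hf : ∀ i ∈ s, 0 ≤ f i) : ∏ i ∈ s, f i ≤ ((∑ i ∈ s, f i) / #s) ^ #s := by
  rcases s.eq_empty_or_nonempty with rfl | hs
  · simp
  have hcard : (0 : ℝ) < #s := by exact_mod_cast hs.card_pos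
  have amgm := Real.geom_mean_le_arith_mean s (fun _ ↦ 1) f (fun _ _ ↦ zero_le_one)
    (by simpa using hcard) hf
  simp only [Real.rpow_one, sum_const, nsmul_eq_mul, mul_one, one_mul] at amgm
  rwa [Real.rpow_inv_le_iff_of_pos (prod_nonneg hf) (div_nonneg (sum_nonneg hf) hcard.le)
    hcard, Real.rpow_natCast] at amgm

theorem prod_mul_sq_midpoint_le {ι : Type*} [Fintype ι] [DecidableEq ι] (f : ι → ℝ)
    (hf : ∀ i, 0 ≤ f i) (i j : ι) :
    (∏ k, f k) * ((f i + f j) / 2) ^ 2 ≤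
      f i * f j * ((∑ k, f k) / Fintype.card ι) ^ Fintype.card ι := by
  have amgm : ∀ h : ι → ℝ, (∀ k, 0 ≤ h k) →
      ∏ k, h k ≤ ((∑ k, h k) / Fintype.card ι) ^ Fintype.card ι :=
    fun h hh ↦ prod_le_arith_mean_pow_card univ h fun k _ ↦ hh k
  rcases eq_or_ne i j with rfl | hij
  · calc (∏ k, f k) * ((f i + f i) / 2) ^ 2 = f i * f i * ∏ k, f k := by ring
      _ ≤ _ := mul_le_mul_of_nonneg_left (amgm f hf) (mul_self_nonneg _)
  set a := (f i + f j) / 2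
  have ha : 0 ≤ a := div_nonneg (add_nonneg (hf i) (hf j)) zero_le_two
  set f' : ι → ℝ := fun k ↦ if k = i ∨ k = j then a else f k
  have hf' : ∀ k ∈ ({i, j} : Finset ι)ᶜ, f' k = f k := fun k hk ↦ by
    simp_all [f']
  have hf'_nonneg : ∀ k, 0 ≤ f' k := fun k ↦ by
    unfold f'; split_ifs <;> [exact ha; exact hf k]
  have hprod : ∀ h : ι → ℝ, ∏ k, h k = h i * h j * ∏ k ∈ {i, j}ᶜ, h k := fun h ↦ by
    rw [← prod_mul_prod_compl {i, j}, prod_pair hij]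
  have hsum : ∀ h : ι → ℝ, ∑ k, h k = h i + h j + ∑ k ∈ {i, j}ᶜ, h k := fun h ↦ by
    rw [← sum_add_sum_compl {i, j}, sum_pair hij]
  have hsum' : ∑ k, f' k = ∑ k, f k := by
    rw [hsum f', hsum f, sum_congr rfl hf']
    simp only [f', a, true_or, or_true, if_true]
    ring
  calc (∏ k, f k) * a ^ 2 = f i * f j * ∏ k, f' k := by
        rw [hprod f', hprod f, prod_congr rfl hf']
        simp only [f', true_or, or_true, if_true]
        ring
    _ ≤ f i * f j * ((∑ k, f' k) / Fintype.card ι) ^ Fintype.card ι :=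
        mul_le_mul_of_nonneg_left (amgm f' hf'_nonneg) (mul_nonneg (hf i) (hf j))
    _ = _ := by rw [hsum']

theorem div_le_one_add_sqrt_div_one_sub_sqrt {M m c : ℝ} (hM : 0 < M) (hm : 0 < m) (hc : 0 < c)
    (h : c * (M + m) ^ 2 ≤ 4 * (M * m)) :
    M / m ≤ (1 + √(1 - c)) / (1 - √(1 - c)) := by
  have hc1 : c ≤ 1 := by nlinarith [sq_nonneg (M - m), mul_pos (add_pos hM hm) (add_pos hM hm)]
  set s := √(1 - c)
  have hs0 : 0 ≤ s := Real.sqrt_nonneg _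
  have hs2 : s ^ 2 = 1 - c := Real.sq_sqrt (by linarith)
  have hs1 : s < 1 := by nlinarith
  have hdiff : M - m ≤ s * (M + m) :=
    abs_le_of_sq_le_sq' (by nlinarith) (by positivity) |>.2
  rw [div_le_div_iff₀ hm (by linarith)]
  linarith

theorem condition_number_bound_general {D : ℕ} (lam : Fin D → ℝ)
    (hpos : ∀ i, 0 < lam i) (g : ℝ)
    (hsum : ∑ i, lam i = D) (hprod : ∏ i, lam i = g ^ D)
    (lmax lmin : ℝ) (hmax : IsGreatest (Set.range lam) lmax)
    (hmin : IsLeast (Set.range lam) lmin) :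
    lmax / lmin ≤ (1 + Real.sqrt (1 - g ^ D)) / (1 - Real.sqrt (1 - g ^ D)) := by
  obtain ⟨⟨i, rfl⟩, -⟩ := hmax
  obtain ⟨⟨j, rfl⟩, -⟩ := hmin
  have hD : (D : ℝ) ≠ 0 := Nat.cast_ne_zero.mpr (Fin.pos i).ne'
  have hgD : 0 < g ^ D := hprod ▸ prod_pos fun k _ ↦ hpos k
  have smoothing := prod_mul_sq_midpoint_le lam (fun k ↦ (hpos k).le) i j
  rw [hprod, hsum, Fintype.card_fin, div_self hD, one_pow, mul_one] at smoothing
  exact div_le_one_add_sqrt_div_one_sub_sqrt (hpos i) (hpos j) hgD (by linarith)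

/-- Among positive reals `λ₁, …, λ_D` with arithmetic mean `1` (`Σλᵢ = D`) and geometric mean
`g ∈ (0,1)` (`∏λᵢ = g^D`), the condition number satisfies
`λmax / λmin ≤ (1 + √(1 − g^D)) / (1 − √(1 − g^D))`. -/
theorem condition_number_bound {D : ℕ} (hD : 0 < D) (lam : Fin D → ℝ)
    (hpos : ∀ i, 0 < lam i) (g : ℝ) (hg0 : 0 < g) (hg1 : g < 1)
    (hsum : ∑ i, lam i = D) (hprod : ∏ i, lam i = g ^ D)
    (lmax lmin : ℝ) (hmax : IsGreatest (Set.range lam) lmax)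
    (hmin : IsLeast (Set.range lam) lmin) :
    lmax / lmin ≤ (1 + Real.sqrt (1 - g ^ D)) / (1 - Real.sqrt (1 - g ^ D)) :=
  condition_number_bound_general lam hpos g hsum hprod lmax lmin hmax hmin
end

section
/- Let λ_1, …, λ_D be positive reals with Σλ_i = D and geometric mean g = (∏λ_i)^{1/D} < 1. Then Var[λ]/λ_max ≥ 2 · (1 − √(1 − g^D))/(1 + √(1 − g^D)) · (1 − g), where Var[λ] = (1/D)Σλ_i² − 1 and λ_max = max_i λ_i. -/
/-!
Write `s = √(1 - g^D)`. If `a ≤ b` are two entries, replacing both by `(a + b)/2` keeps the sum, so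
AM–GM gives `g^D ((a + b)/2)² ≤ ab`, which solves to `(1 - s) b ≤ (1 + s) a`. Hence every entry is
at least `t = (1 - s)/(1 + s) · λmax`, and summing `x - 1 - log x ≤ (x - 1)²/(2t)` over the entries
gives `D (1 - g) ≤ -D log g ≤ D Var[λ]/(2t)`.
-/

open Finset Real

namespace Real

theorem sub_one_sub_log_le_sq_div {m x : ℝ} (hm : 0 < m) (hm1 : m ≤ 1) (hmx : m ≤ x) :
    x - 1 - log x ≤ (x - 1) ^ 2 / (2 * m) := by
  rcases le_total 1 x with h1x | hx1
  · have hlog : 2 * (x - 1) / (x - 1 + 2) ≤ log x := by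
      simpa using le_log_one_add_of_nonneg (sub_nonneg.2 h1x)
    calc x - 1 - log x ≤ (x - 1) ^ 2 / (x + 1) := by
          have : 2 * (x - 1) / (x - 1 + 2) = x - 1 - (x - 1) ^ 2 / (x + 1) := by
            field_simp; ring
          linarith
      _ ≤ (x - 1) ^ 2 / (2 * m) := by gcongr; linarith
  · have hx : 0 < x := hm.trans_le hmx
    have hlog : (x - x⁻¹) / 2 ≤ log x := by
      rw [← sinh_log hx]
      exact sinh_le_self_iff.2 (log_nonpos hx.le hx1)
    calc x - 1 - log x ≤ (x - 1) ^ 2 / (2 * x) := by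
          have : (x - x⁻¹) / 2 = x - 1 - (x - 1) ^ 2 / (2 * x) := by
            field_simp; ring
          linarith
      _ ≤ (x - 1) ^ 2 / (2 * m) := by gcongr

end Real

/-- By `(1 - s²)(a + b)² - 4ab = ((1 - s)b - (1 + s)a)((1 + s)b - (1 - s)a)`. -/
theorem one_sub_mul_le_one_add_mul_of_sq_mean_le {s a b : ℝ} (hs : 0 ≤ s) (ha : 0 < a)
    (hab : a ≤ b) (h : (1 - s ^ 2) * ((a + b) / 2) ^ 2 ≤ a * b) :
    (1 - s) * b ≤ (1 + s) * a := by
  by_contra! hlt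
  have hpos : 0 < (1 + s) * b - (1 - s) * a := by nlinarith
  nlinarith [mul_pos (sub_pos.2 hlt) hpos]

section

variable {ι : Type*} [Fintype ι] {lam : ι → ℝ}

/-- AM–GM, in the form `log x ≤ x - 1`, for the vector with `λⱼ, λₖ` replaced by their mean. -/
theorem prod_mul_sq_mean_le_mul (hpos : ∀ i, 0 < lam i) (hsum : ∑ i, lam i = Fintype.card ι)
    {j k : ι} (hjk : j ≠ k) : (∏ i, lam i) * ((lam j + lam k) / 2) ^ 2 ≤ lam j * lam k := by
  classical
  set c := (lam j + lam k) / 2 with hc_def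
  have hc : 0 < c := by have := hpos j; have := hpos k; positivity
  have hcompl : ∑ i ∈ {j, k}ᶜ, (lam i - 1) = -(lam j - 1 + (lam k - 1)) := by
    have htot : ∑ i, (lam i - 1) = 0 := by simp [sum_sub_distrib, hsum]
    rw [← sum_add_sum_compl {j, k}, sum_pair hjk] at htot
    linarith
  have hlog_compl : ∑ i ∈ {j, k}ᶜ, log (lam i) ≤ ∑ i ∈ {j, k}ᶜ, (lam i - 1) :=
    sum_le_sum fun i _ => log_le_sub_one_of_pos (hpos i)
  have hlog_c := log_le_sub_one_of_pos hc
  have hP : 0 < ∏ i, lam i := prod_pos fun i _ => hpos i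
  rw [← log_le_log_iff (by positivity) (mul_pos (hpos j) (hpos k)), log_mul hP.ne' (by positivity),
    log_pow, log_prod fun i _ => (hpos i).ne', ← sum_add_sum_compl {j, k}, sum_pair hjk,
    log_mul (hpos j).ne' (hpos k).ne']
  push_cast
  linarith

theorem one_sub_sqrt_div_one_add_sqrt_mul_le (hpos : ∀ i, 0 < lam i)
    (hsum : ∑ i, lam i = Fintype.card ι) {i₀ : ι} (hmax : ∀ i, lam i ≤ lam i₀) (i : ι) :
    (1 - √(1 - ∏ j, lam j)) / (1 + √(1 - ∏ j, lam j)) * lam i₀ ≤ lam i := by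
  have hs := sqrt_nonneg (1 - ∏ j, lam j)
  rw [div_mul_eq_mul_div, div_le_iff₀ (by positivity), mul_comm _ (1 + _)]
  rcases eq_or_ne i i₀ with rfl | hi
  · nlinarith [hpos i]
  have hpair := prod_mul_sq_mean_le_mul hpos hsum hi
  have hP : ∏ j, lam j ≤ 1 := by
    have hmean : lam i * lam i₀ ≤ ((lam i + lam i₀) / 2) ^ 2 := by
      nlinarith [sq_nonneg (lam i - lam i₀)]
    nlinarith [mul_pos (hpos i) (hpos i₀)]
  refine one_sub_mul_le_one_add_mul_of_sq_mean_le hs (hpos i) (hmax i) ?_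
  rwa [sq_sqrt (sub_nonneg.2 hP), sub_sub_cancel]

/-- The Cartwright–Field inequality `Var[λ]/(2 λmin) ≥ 1 - g`, before `1 - g ≤ -log g`. -/
theorem neg_sum_log_le_sum_sq_sub_card_div [Nonempty ι] (hsum : ∑ i, lam i = Fintype.card ι)
    {t : ℝ} (ht : 0 < t) (hle : ∀ i, t ≤ lam i) :
    -∑ i, log (lam i) ≤ (∑ i, lam i ^ 2 - Fintype.card ι) / (2 * t) := by
  have hcard : (0 : ℝ) < Fintype.card ι := by exact_mod_cast Fintype.card_pos
  have ht1 : t ≤ 1 := by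
    have := card_nsmul_le_sum univ lam t fun i _ => hle i
    rw [hsum, card_univ, nsmul_eq_mul] at this
    nlinarith
  calc -∑ i, log (lam i) = ∑ i, (lam i - 1 - log (lam i)) := by
        simp only [sum_sub_distrib, hsum, sum_const, card_univ, nsmul_eq_mul, mul_one]; ring
    _ ≤ ∑ i, (lam i - 1) ^ 2 / (2 * t) :=
        sum_le_sum fun i _ => sub_one_sub_log_le_sq_div ht ht1 (hle i)
    _ = (∑ i, lam i ^ 2 - Fintype.card ι) / (2 * t) := by
        rw [← sum_div]
        simp only [sub_sq, mul_one, one_pow, sum_add_distrib, sum_sub_distrib, ← mul_sum, hsum,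
          sum_const, card_univ, nsmul_eq_mul]
        ring

end

theorem variance_over_max_lower_bound_general {D : ℕ} (hD : 0 < D) (lam : Fin D → ℝ)
    (hpos : ∀ i, 0 < lam i) (hsum : ∑ i, lam i = D)
    (g : ℝ) (hg : g = (∏ i, lam i) ^ ((1 : ℝ) / D))
    (lmax : ℝ) (hmax : IsGreatest (Set.range lam) lmax) :
    2 * ((1 - Real.sqrt (1 - g ^ D)) / (1 + Real.sqrt (1 - g ^ D))) * (1 - g) ≤
      ((1 / D) * ∑ i, lam i ^ 2 - 1) / lmax := by
  obtain ⟨i₀, rfl⟩ := hmax.1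
  have : Nonempty (Fin D) := ⟨i₀⟩
  have hsum' : ∑ i, lam i = Fintype.card (Fin D) := by simpa using hsum
  have hP : 0 < ∏ i, lam i := prod_pos fun i _ => hpos i
  have hgD : g ^ D = ∏ i, lam i := by rw [hg, one_div, rpow_inv_natCast_pow hP.le hD.ne']
  have hg0 : 0 < g := hg ▸ rpow_pos_of_pos hP _
  rw [hgD]
  set s := √(1 - ∏ i, lam i)
  have hs1 : s < 1 := by rw [sqrt_lt' one_pos]; linarith
  set t := (1 - s) / (1 + s) * lam i₀
  have ht : 0 < t := mul_pos (div_pos (by linarith) (by positivity)) (hpos i₀)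
  have hle : ∀ i, t ≤ lam i :=
    one_sub_sqrt_div_one_add_sqrt_mul_le hpos hsum' fun i => hmax.2 ⟨i, rfl⟩
  have hCF := neg_sum_log_le_sum_sq_sub_card_div hsum' ht hle
  rw [← log_prod fun i _ => (hpos i).ne', ← hgD, log_pow, Fintype.card_fin] at hCF
  have hlog := log_le_sub_one_of_pos hg0
  rw [le_div_iff₀ (hpos i₀)]
  calc 2 * ((1 - s) / (1 + s)) * (1 - g) * lam i₀ = 2 * t * (1 - g) := by ring
    _ ≤ 2 * t * -log g := by gcongr; linarith
    _ ≤ 1 / D * ∑ i, lam i ^ 2 - 1 := by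
        rw [le_div_iff₀ (by positivity)] at hCF
        field_simp
        linarith

/-- For positive reals `λ₁, …, λ_D` with `Σλᵢ = D` and geometric mean `g = (∏λᵢ)^{1/D} < 1`,
`Var[λ]/λmax ≥ 2 · (1 − √(1 − g^D))/(1 + √(1 − g^D)) · (1 − g)`, where
`Var[λ] = (1/D)Σλᵢ² − 1`. -/
theorem variance_over_max_lower_bound {D : ℕ} (hD : 0 < D) (lam : Fin D → ℝ)
    (hpos : ∀ i, 0 < lam i) (hsum : ∑ i, lam i = D)
    (g : ℝ) (hg : g = (∏ i, lam i) ^ ((1 : ℝ) / D)) (hg1 : g < 1)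
    (lmax : ℝ) (hmax : IsGreatest (Set.range lam) lmax) :
    2 * ((1 - Real.sqrt (1 - g ^ D)) / (1 + Real.sqrt (1 - g ^ D))) * (1 - g) ≤
      ((1 / D) * ∑ i, lam i ^ 2 - 1) / lmax :=
  variance_over_max_lower_bound_general hD lam hpos hsum g hg lmax hmax
end
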